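/- For every n ≥ 6, every graph in the family 𝓕_n contains exactly h₀(n) induced 6-cycles, namely exactly the 6-cycles of the form u₁–a–u₂–b–u₃–c with a ∈ A, b ∈ B, c ∈ C. -/

import Mathlib

open SimpleGraph

/-- `H` is a minor of `G`: there is a family of nonempty, connected, pairwise disjoint
branch sets in `G`, one for each vertex of `H`, such that adjacent vertices of `H`
have adjacent branch sets. -/
def IsMinorOf {W : Type*} {V : Type*} (H : SimpleGraph W) (G : SimpleGraph V) : Prop :=
  ∃ φ : W → Set V,
    (∀ w, (G.induce (φ w)).Connected) ∧
    (Pairwise fun w₁ w₂ => Disjoint (φ w₁) (φ w₂)) ∧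
    ∀ ⦃w₁ w₂⦄, H.Adj w₁ w₂ → ∃ x ∈ φ w₁, ∃ y ∈ φ w₂, G.Adj x y

/-- A graph is planar iff (by Wagner's theorem) it has no `K₅` minor and no `K₃,₃` minor. -/
def SimpleGraph.Planar {V : Type*} (G : SimpleGraph V) : Prop :=
  ¬ IsMinorOf (completeGraph (Fin 5)) G ∧
  ¬ IsMinorOf (completeBipartiteGraph (Fin 3) (Fin 3)) G

/-- `s` is a set of `m` vertices of `G` whose induced subgraph is a cycle of length `m`. -/
def IsIndCycle {V : Type*} (G : SimpleGraph V) (m : ℕ) (s : Finset V) : Prop :=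
  s.card = m ∧ Nonempty ((G.induce (s : Set V)) ≃g (cycleGraph m))

/-- The number of induced 6-cycles of `G`. -/
noncomputable def c6Count {V : Type*} [Fintype V] (G : SimpleGraph V) : ℕ :=
  {s : Finset V | IsIndCycle G 6 s}.ncard

/-- The number of induced 6-cycles of `G` containing the vertex `v`. -/
noncomputable def c6CountAt {V : Type*} [Fintype V] (G : SimpleGraph V) (v : V) : ℕ :=
  {s : Finset V | IsIndCycle G 6 s ∧ v ∈ s}.ncard

/-- `f_I(n, C₆)`: the maximum number of induced 6-cycles over all planar graphs
on `n` vertices. -/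
noncomputable def fI (n : ℕ) : ℕ :=
  sSup {m | ∃ G : SimpleGraph (Fin n), G.Planar ∧ c6Count G = m}

def h0 (n : ℕ) : ℕ :=
  if n % 3 = 0 then (n / 3 - 1) ^ 3
  else if n % 3 = 1 then ((n - 4) / 3) ^ 2 * ((n - 1) / 3)
  else ((n - 2) / 3) ^ 2 * ((n - 5) / 3)

def h1 (n : ℕ) : ℕ :=
  if n % 3 = 0 then (n / 3 - 1) ^ 2
  else if n % 3 = 1 then ((n - 4) / 3) ^ 2
  else ((n - 2) / 3) * ((n - 5) / 3)

/-- `x` and `y` are principal neighbours in `G`: they are adjacent and some induced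
6-cycle of `G` contains both of them. -/
def PrincipalNbr {V : Type*} (G : SimpleGraph V) (x y : V) : Prop :=
  G.Adj x y ∧ ∃ s : Finset V, IsIndCycle G 6 s ∧ x ∈ s ∧ y ∈ s

/-- `X^{uvw}`: the vertices of `G - {u,v,w}` lying in some induced 6-cycle of `G`
containing the path `u-v-w` (i.e. containing `u`, `v` and `w`). -/
def Xset {V : Type*} (G : SimpleGraph V) (u v w : V) : Set V :=
  {x | x ≠ u ∧ x ≠ v ∧ x ≠ w ∧
    ∃ s : Finset V, IsIndCycle G 6 s ∧ u ∈ s ∧ v ∈ s ∧ w ∈ s ∧ x ∈ s}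

def X1set {V : Type*} (G : SimpleGraph V) (u v w : V) : Set V :=
  Xset G u v w ∩ G.neighborSet u

def X3set {V : Type*} (G : SimpleGraph V) (u v w : V) : Set V :=
  Xset G u v w ∩ G.neighborSet w

def X2set {V : Type*} (G : SimpleGraph V) (u v w : V) : Set V :=
  Xset G u v w \ (X1set G u v w ∪ X3set G u v w)

/-- The bipartite subgraph of `G` induced between the disjoint vertex sets `S` and `T`:
the graph on `S ∪ T` whose edges are exactly the edges of `G` with one endpoint in `S`
and one in `T`. -/
def bipBetween {V : Type*} (G : SimpleGraph V) (S T : Set V) : SimpleGraph ↑(S ∪ T) where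
  Adj x y := G.Adj x y ∧ ((↑x ∈ S ∧ ↑y ∈ T) ∨ (↑x ∈ T ∧ ↑y ∈ S))
  symm := by
    constructor
    intro x y ⟨h, h2⟩
    exact ⟨h.symm, (h2.imp And.symm And.symm).symm⟩
  loopless := by
    constructor
    intro x ⟨h, _⟩
    exact G.irrefl h

/-- `a b c d e f` are the vertices, in cyclic order, of an induced 6-cycle of `G`. -/
def IsIndC6On {V : Type*} [DecidableEq V] (G : SimpleGraph V) (a b c d e f : V) : Prop :=
  ([a, b, c, d, e, f] : List V).Nodup ∧
  IsIndCycle G 6 {a, b, c, d, e, f} ∧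
  G.Adj a b ∧ G.Adj b c ∧ G.Adj c d ∧ G.Adj d e ∧ G.Adj e f ∧ G.Adj f a ∧
  ¬ G.Adj a c ∧ ¬ G.Adj a d ∧ ¬ G.Adj a e ∧
  ¬ G.Adj b d ∧ ¬ G.Adj b e ∧ ¬ G.Adj b f ∧
  ¬ G.Adj c e ∧ ¬ G.Adj c f ∧ ¬ G.Adj d f

/-- `x` and `y` are consecutive entries (in either order) of the list `l`. -/
def ListConsec {V : Type*} (l : List V) (x y : V) : Prop :=
  ∃ i : ℕ, (l[i]? = some x ∧ l[i + 1]? = some y) ∨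
           (l[i]? = some y ∧ l[i + 1]? = some x)

/-- The data witnessing that `G` belongs to the family `𝓕_n` (with `n = Fintype.card V`):
the vertex set is partitioned as `{u₁,u₂,u₃} ∪ A ∪ B ∪ C` with `|A|, |B|, |C|` as equal
as possible, every vertex of `A` is joined to `u₁, u₂`, every vertex of `B` to `u₂, u₃`,
every vertex of `C` to `u₃, u₁`, and all remaining edges are consecutive along some
fixed orderings (paths) of `A`, `B`, `C`. -/
def FWitness {V : Type*} [Fintype V] [DecidableEq V] (G : SimpleGraph V) (u1 u2 u3 : V)
    (A B C : Finset V) : Prop :=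
  u1 ≠ u2 ∧ u1 ≠ u3 ∧ u2 ≠ u3 ∧
  u1 ∉ A ∪ B ∪ C ∧ u2 ∉ A ∪ B ∪ C ∧ u3 ∉ A ∪ B ∪ C ∧
  Disjoint A B ∧ Disjoint A C ∧ Disjoint B C ∧
  ({u1, u2, u3} : Finset V) ∪ A ∪ B ∪ C = Finset.univ ∧
  A.card + B.card + C.card = Fintype.card V - 3 ∧
  A.card ≤ B.card + 1 ∧ B.card ≤ A.card + 1 ∧
  A.card ≤ C.card + 1 ∧ C.card ≤ A.card + 1 ∧
  B.card ≤ C.card + 1 ∧ C.card ≤ B.card + 1 ∧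
  (∀ a ∈ A, G.Adj u1 a ∧ G.Adj u2 a) ∧
  (∀ b ∈ B, G.Adj u2 b ∧ G.Adj u3 b) ∧
  (∀ c ∈ C, G.Adj u3 c ∧ G.Adj u1 c) ∧
  ∃ la lb lc : List V,
    la.Nodup ∧ lb.Nodup ∧ lc.Nodup ∧
    la.toFinset = A ∧ lb.toFinset = B ∧ lc.toFinset = C ∧
    ∀ x y, G.Adj x y →
      (x = u1 ∧ (y ∈ A ∨ y ∈ C)) ∨ (y = u1 ∧ (x ∈ A ∨ x ∈ C)) ∨
      (x = u2 ∧ (y ∈ A ∨ y ∈ B)) ∨ (y = u2 ∧ (x ∈ A ∨ x ∈ B)) ∨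
      (x = u3 ∧ (y ∈ B ∨ y ∈ C)) ∨ (y = u3 ∧ (x ∈ B ∨ x ∈ C)) ∨
      ListConsec la x y ∨ ListConsec lb x y ∨ ListConsec lc x y

/-- `G` belongs to the family `𝓕_n`, where `n = Fintype.card V`. -/
def InFFamily {V : Type*} [Fintype V] [DecidableEq V] (G : SimpleGraph V) : Prop :=
  ∃ (u1 u2 u3 : V) (A B C : Finset V), FWitness G u1 u2 u3 A B C

/-!
Every vertex of an induced 6-cycle `s` has exactly two neighbours in `s`, and no proper nonempty
subset of `s` is closed under adjacency in `s`. The hub `u₁` is adjacent to exactly `A ∪ C`, so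
`u₁ ∈ s` forces `|s ∩ A| + |s ∩ C| = 2`; and as `A` carries only a path, `s` misses `A` when it
misses both `u₁` and `u₂`. Since the family is invariant under the rotation
`(u₁, u₂, u₃, A, B, C) ↦ (u₂, u₃, u₁, B, C, A)`, the same holds at every hub, and comparing with
`|s| = 6` forces all three hubs into `s` and `|s ∩ A| = |s ∩ B| = |s ∩ C| = 1`. Conversely every
hexagon `u₁ a u₂ b u₃ c` is induced, so the induced 6-cycles are counted by `|A| |B| |C| = h₀(n)`.
-/

open Finset

section InducedCycle

variable {V : Type*} {G : SimpleGraph V} {m : ℕ} {s : Finset V}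

theorem IsIndCycle.card_filter_adj [DecidableRel G.Adj] (hs : IsIndCycle G m s) (hm : 3 ≤ m)
    {x : V} (hx : x ∈ s) : #{y ∈ s | G.Adj x y} = 2 := by
  obtain ⟨-, ⟨φ⟩⟩ := hs
  obtain ⟨k, rfl⟩ := Nat.exists_eq_add_of_le' hm
  rw [← cycleGraph_degree_three_le (v := φ ⟨x, hx⟩), φ.degree_eq, ← card_neighborFinset_eq_degree,
    ← card_map (Function.Embedding.subtype _)]
  congr 1
  ext y
  simp [and_comm]

theorem IsIndCycle.eq_of_adj_closed (hs : IsIndCycle G m s) {T : Finset V} (hTs : T ⊆ s)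
    (hT : T.Nonempty) (hclosed : ∀ x ∈ T, ∀ y ∈ s, G.Adj x y → y ∈ T) : T = s := by
  obtain ⟨-, ⟨φ⟩⟩ := hs
  obtain ⟨x, hx⟩ := hT
  suffices ∀ y, (G.induce (s : Set V)).Reachable ⟨x, hTs hx⟩ y → y.1 ∈ T from
    hTs.antisymm fun y hy => this ⟨y, hy⟩ (φ.preconnected_iff.2 cycleGraph_preconnected _ _)
  intro y hreach
  rw [reachable_iff_reflTransGen] at hreach
  induction hreach with
  | refl => exact hx
  | tail _ hadj ih => exact hclosed _ ih _ (coe_mem _) hadj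

theorem isIndCycle_image_of_adj_iff [DecidableEq V] {w : Fin m → V} (hw : Function.Injective w)
    (hadj : ∀ i j, G.Adj (w i) (w j) ↔ (cycleGraph m).Adj i j) :
    IsIndCycle G m (univ.image w) := by
  refine ⟨by rw [card_image_of_injective _ hw, card_fin], ⟨RelIso.symm ⟨?_, ?_⟩⟩⟩
  · exact Equiv.ofBijective (fun i => ⟨w i, by simp⟩)
      ⟨fun i j h => hw (congrArg Subtype.val h), fun ⟨y, hy⟩ => by
        obtain ⟨i, -, rfl⟩ := mem_image.1 hy; exact ⟨i, rfl⟩⟩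
  · intro i j; exact hadj i j

end InducedCycle

section ListConsec

variable {V : Type*} {l : List V} {x y : V}

theorem ListConsec.mem (h : ListConsec l x y) : x ∈ l ∧ y ∈ l := by
  obtain ⟨i, h | h⟩ := h
  · exact ⟨List.mem_of_getElem? h.1, List.mem_of_getElem? h.2⟩
  · exact ⟨List.mem_of_getElem? h.2, List.mem_of_getElem? h.1⟩

theorem ListConsec.idxOf_succ_eq_or [DecidableEq V] (hl : l.Nodup) (h : ListConsec l x y) :
    l.idxOf x + 1 = l.idxOf y ∨ l.idxOf y + 1 = l.idxOf x := by
  have idxOf_eq : ∀ i z, l[i]? = some z → l.idxOf z = i := fun i z hz =>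
    (List.getElem?_inj (List.idxOf_lt_length_iff.2 (List.mem_of_getElem? hz)) hl).1
      ((List.getElem?_idxOf (List.mem_of_getElem? hz)).trans hz.symm)
  obtain ⟨i, ⟨h1, h2⟩ | ⟨h1, h2⟩⟩ := h
  · exact .inl (by rw [idxOf_eq i x h1, idxOf_eq (i + 1) y h2])
  · exact .inr (by rw [idxOf_eq i y h1, idxOf_eq (i + 1) x h2])

theorem exists_card_filter_adj_le_one_of_listConsec [DecidableEq V] {G : SimpleGraph V}
    [DecidableRel G.Adj] (hl : l.Nodup) {s : Finset V} (hs : s.Nonempty)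
    (hadj : ∀ x ∈ s, ∀ y ∈ s, G.Adj x y → ListConsec l x y) :
    ∃ x ∈ s, #{y ∈ s | G.Adj x y} ≤ 1 := by
  -- the vertex of `s` coming first along `l` has neighbours in `s` only right after it
  obtain ⟨x, hx, hmin⟩ := s.exists_min_image l.idxOf hs
  refine ⟨x, hx, card_le_one.2 fun y hy z hz => ?_⟩
  rw [mem_filter] at hy hz
  have hcy := hadj x hx y hy.1 hy.2
  have hcz := hadj x hx z hz.1 hz.2
  have hidx : l.idxOf y = l.idxOf z := by
    have := hmin y hy.1; have := hmin z hz.1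
    rcases hcy.idxOf_succ_eq_or hl with h | h <;> rcases hcz.idxOf_succ_eq_or hl with h' | h' <;>
      omega
  exact (List.idxOf_inj hcy.mem.2).1 hidx

end ListConsec

namespace FWitness

variable {V : Type*} [Fintype V] [DecidableEq V] {G : SimpleGraph V} {u1 u2 u3 : V}
  {A B C : Finset V}

theorem rotate (hF : FWitness G u1 u2 u3 A B C) : FWitness G u2 u3 u1 B C A := by
  obtain ⟨h12, h13, h23, hu1, hu2, hu3, hAB, hAC, hBC, hcover, hcard, b1, b2, b3, b4, b5, b6,
    hA, hB, hC, la, lb, lc, nda, ndb, ndc, fa, fb, fc, hclass⟩ := hF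
  refine ⟨h23, h12.symm, h13.symm, ?_, ?_, ?_, hBC, hAB.symm, hAC.symm, ?_, by omega,
    b5, b6, b2, b1, b4, b3, hB, hC, hA, lb, lc, la, ndb, ndc, nda, fb, fc, fa, fun x y hxy => ?_⟩
  · simpa [or_comm, or_left_comm] using hu2
  · simpa [or_comm, or_left_comm] using hu3
  · simpa [or_comm, or_left_comm] using hu1
  · rw [← hcover]; ext; simp only [mem_union, mem_insert, mem_singleton]; tauto
  · rcases hclass x y hxy with h | h | h | h | h | h | h | h | h
    · exact .inr <| .inr <| .inr <| .inr <| .inl ⟨h.1, h.2.symm⟩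
    · exact .inr <| .inr <| .inr <| .inr <| .inr <| .inl ⟨h.1, h.2.symm⟩
    · exact .inl ⟨h.1, h.2.symm⟩
    · exact .inr <| .inl ⟨h.1, h.2.symm⟩
    · exact .inr <| .inr <| .inl h
    · exact .inr <| .inr <| .inr <| .inl h
    · exact .inr <| .inr <| .inr <| .inr <| .inr <| .inr <| .inr <| .inr h
    · exact .inr <| .inr <| .inr <| .inr <| .inr <| .inr <| .inl h
    · exact .inr <| .inr <| .inr <| .inr <| .inr <| .inr <| .inr <| .inl h

theorem eq_hub_or_mem_part (hF : FWitness G u1 u2 u3 A B C) (x : V) :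
    x = u1 ∨ x = u2 ∨ x = u3 ∨ x ∈ A ∨ x ∈ B ∨ x ∈ C := by
  obtain ⟨-, -, -, -, -, -, -, -, -, hcover, -⟩ := hF
  have := hcover ▸ mem_univ x
  simpa only [mem_union, mem_insert, mem_singleton, or_assoc] using this

theorem adj_cases (hF : FWitness G u1 u2 u3 A B C) {x y : V} (h : G.Adj x y) :
    (x = u1 ∧ (y ∈ A ∨ y ∈ C)) ∨ (y = u1 ∧ (x ∈ A ∨ x ∈ C)) ∨
    (x = u2 ∧ (y ∈ A ∨ y ∈ B)) ∨ (y = u2 ∧ (x ∈ A ∨ x ∈ B)) ∨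
    (x = u3 ∧ (y ∈ B ∨ y ∈ C)) ∨ (y = u3 ∧ (x ∈ B ∨ x ∈ C)) ∨
    (x ∈ A ∧ y ∈ A) ∨ (x ∈ B ∧ y ∈ B) ∨ (x ∈ C ∧ y ∈ C) := by
  obtain ⟨-, -, -, -, -, -, -, -, -, -, -, -, -, -, -, -, -, -, -, -, la, lb, lc, -, -, -,
    rfl, rfl, rfl, hclass⟩ := hF
  have mem_toFinset {l : List V} (h : ListConsec l x y) : x ∈ l.toFinset ∧ y ∈ l.toFinset :=
    ⟨List.mem_toFinset.2 h.mem.1, List.mem_toFinset.2 h.mem.2⟩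
  rcases hclass x y h with h | h | h | h | h | h | h | h | h
  · exact .inl h
  · exact .inr <| .inl h
  · exact .inr <| .inr <| .inl h
  · exact .inr <| .inr <| .inr <| .inl h
  · exact .inr <| .inr <| .inr <| .inr <| .inl h
  · exact .inr <| .inr <| .inr <| .inr <| .inr <| .inl h
  · exact .inr <| .inr <| .inr <| .inr <| .inr <| .inr <| .inl (mem_toFinset h)
  · exact .inr <| .inr <| .inr <| .inr <| .inr <| .inr <| .inr <| .inl (mem_toFinset h)
  · exact .inr <| .inr <| .inr <| .inr <| .inr <| .inr <| .inr <| .inr (mem_toFinset h)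

theorem hubs_ne (hF : FWitness G u1 u2 u3 A B C) : u1 ≠ u2 ∧ u1 ≠ u3 ∧ u2 ≠ u3 :=
  ⟨hF.1, hF.2.1, hF.2.2.1⟩

theorem hub_notMem_parts (hF : FWitness G u1 u2 u3 A B C) : u1 ∉ A ∧ u1 ∉ B ∧ u1 ∉ C := by
  obtain ⟨-, -, -, hu1, -⟩ := hF
  simpa only [mem_union, not_or, and_assoc] using hu1

theorem disjoint₁₂ (hF : FWitness G u1 u2 u3 A B C) : Disjoint A B := by
  obtain ⟨-, -, -, -, -, -, hAB, -⟩ := hF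
  exact hAB

theorem notMem_of_mem (hF : FWitness G u1 u2 u3 A B C) {a : V} (ha : a ∈ A) : a ∉ B ∧ a ∉ C :=
  ⟨disjoint_left.1 hF.disjoint₁₂ ha, disjoint_right.1 hF.rotate.rotate.disjoint₁₂ ha⟩

theorem adj_hubs_of_mem (hF : FWitness G u1 u2 u3 A B C) {a : V} (ha : a ∈ A) :
    G.Adj u1 a ∧ G.Adj u2 a := by
  obtain ⟨-, -, -, -, -, -, -, -, -, -, -, -, -, -, -, -, -, hA, -⟩ := hF
  exact hA a ha

theorem adj_hub_iff (hF : FWitness G u1 u2 u3 A B C) (x : V) :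
    G.Adj u1 x ↔ x ∈ A ∨ x ∈ C := by
  refine ⟨fun h => ?_, fun h => h.elim (fun h => (hF.adj_hubs_of_mem h).1)
    fun h => (hF.rotate.rotate.adj_hubs_of_mem h).2⟩
  have := hF.hub_notMem_parts
  have := hF.hubs_ne
  rcases hF.adj_cases h with h | h | h | h | h | h | h | h | h <;> simp_all

theorem eq_or_eq_or_mem_of_adj (hF : FWitness G u1 u2 u3 A B C) {x y : V} (hx : x ∈ A)
    (h : G.Adj x y) : y = u1 ∨ y = u2 ∨ y ∈ A := by
  have := hF.hub_notMem_parts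
  have := hF.rotate.hub_notMem_parts
  have := hF.rotate.rotate.hub_notMem_parts
  have := hF.notMem_of_mem hx
  rcases hF.adj_cases h with h | h | h | h | h | h | h | h | h <;> simp_all

theorem exists_card_filter_adj_le_one [DecidableRel G.Adj] (hF : FWitness G u1 u2 u3 A B C)
    {s : Finset V} (hsA : s ⊆ A) (hs : s.Nonempty) : ∃ x ∈ s, #{y ∈ s | G.Adj x y} ≤ 1 := by
  have hu1 := hF.hub_notMem_parts
  have hu2 := hF.rotate.hub_notMem_parts
  have hu3 := hF.rotate.rotate.hub_notMem_parts
  have hnotMem := fun x (hx : x ∈ s) => hF.notMem_of_mem (hsA hx)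
  obtain ⟨-, -, -, -, -, -, -, -, -, -, -, -, -, -, -, -, -, -, -, -, la, lb, lc, nda, -, -, -,
    fb, fc, hclass⟩ := hF
  refine exists_card_filter_adj_le_one_of_listConsec nda hs fun x hx y hy hxy => ?_
  have hxA := hsA hx
  have hyA := hsA hy
  rcases hclass x y hxy with h | h | h | h | h | h | h | h | h
  iterate 6 simp_all
  · exact h
  · exact absurd (fb ▸ List.mem_toFinset.2 h.mem.1) (hnotMem x hx).1
  · exact absurd (fc ▸ List.mem_toFinset.2 h.mem.1) (hnotMem x hx).2

theorem not_adj_of_mem_of_mem (hF : FWitness G u1 u2 u3 A B C) {a b : V} (ha : a ∈ A)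
    (hb : b ∈ B) : ¬ G.Adj a b := by
  intro h
  rcases hF.eq_or_eq_or_mem_of_adj ha h with rfl | rfl | hbA
  · exact hF.hub_notMem_parts.2.1 hb
  · exact hF.rotate.hub_notMem_parts.1 hb
  · exact (hF.notMem_of_mem hbA).1 hb

theorem isIndCycle_hexagon (hF : FWitness G u1 u2 u3 A B C) {a b c : V} (ha : a ∈ A)
    (hb : b ∈ B) (hc : c ∈ C) : IsIndCycle G 6 {u1, a, u2, b, u3, c} := by
  have hu1 := hF.hub_notMem_parts
  have hu2 := hF.rotate.hub_notMem_parts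
  have hu3 := hF.rotate.rotate.hub_notMem_parts
  have ha' := hF.notMem_of_mem ha
  have hb' := hF.rotate.notMem_of_mem hb
  have hc' := hF.rotate.rotate.notMem_of_mem hc
  have hne := hF.hubs_ne
  have hw : univ.image ![u1, a, u2, b, u3, c] = {u1, a, u2, b, u3, c} := by
    ext x; simp [Fin.exists_fin_succ, eq_comm]
  rw [← hw]
  refine isIndCycle_image_of_adj_iff ?_ fun i j => ?_
  · intro i j hij
    fin_cases i <;> fin_cases j <;> simp_all
  · have adj1 := hF.adj_hub_iff
    have adj2 := hF.rotate.adj_hub_iff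
    have adj3 := hF.rotate.rotate.adj_hub_iff
    have adj1' := fun x => (G.adj_comm x u1).trans (adj1 x)
    have adj2' := fun x => (G.adj_comm x u2).trans (adj2 x)
    have adj3' := fun x => (G.adj_comm x u3).trans (adj3 x)
    have nab := hF.not_adj_of_mem_of_mem ha hb
    have nbc := hF.rotate.not_adj_of_mem_of_mem hb hc
    have nca := hF.rotate.rotate.not_adj_of_mem_of_mem hc ha
    have nba : ¬ G.Adj b a := fun h => nab h.symm
    have ncb : ¬ G.Adj c b := fun h => nbc h.symm
    have nac : ¬ G.Adj a c := fun h => nca h.symm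
    fin_cases i <;> fin_cases j <;> simp [*, cycleGraph_adj] <;> decide

theorem card_le_hubs_add_parts (hF : FWitness G u1 u2 u3 A B C) (s : Finset V) :
    #s ≤ (if u1 ∈ s then 1 else 0) + (if u2 ∈ s then 1 else 0) + (if u3 ∈ s then 1 else 0) +
      #(s ∩ A) + #(s ∩ B) + #(s ∩ C) := by
  have hsub : s ⊆ ({u1, u2, u3} : Finset V).filter (· ∈ s) ∪ s ∩ A ∪ s ∩ B ∪ s ∩ C := by
    intro x hx
    simp only [mem_union, mem_inter, mem_filter, mem_insert, mem_singleton]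
    rcases hF.eq_hub_or_mem_part x with rfl | rfl | rfl | h | h | h <;> simp [*]
  have hhubs : #(({u1, u2, u3} : Finset V).filter (· ∈ s)) =
      (if u1 ∈ s then 1 else 0) + (if u2 ∈ s then 1 else 0) + (if u3 ∈ s then 1 else 0) := by
    obtain ⟨h12, h13, h23⟩ := hF.hubs_ne
    rw [card_filter, sum_insert (by simp [h12, h13]), sum_pair h23, add_assoc]
  calc #s ≤ _ := card_le_card hsub
    _ ≤ #(({u1, u2, u3} : Finset V).filter (· ∈ s)) + #(s ∩ A) + #(s ∩ B) + #(s ∩ C) := by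
      grw [card_union_le, card_union_le, card_union_le]
    _ = _ := by rw [hhubs]

section

variable [DecidableRel G.Adj] {s : Finset V}

theorem card_inter_add_card_inter (hF : FWitness G u1 u2 u3 A B C) (hs : IsIndCycle G 6 s)
    (h1 : u1 ∈ s) : #(s ∩ A) + #(s ∩ C) = 2 := by
  rw [← card_union_of_disjoint ((hF.rotate.rotate.disjoint₁₂).symm.mono
    inter_subset_right inter_subset_right), ← hs.card_filter_adj (by norm_num) h1]
  congr 1
  ext x
  simp only [mem_union, mem_inter, mem_filter, hF.adj_hub_iff, and_or_left]

theorem inter_eq_empty_of_notMem_of_notMem (hF : FWitness G u1 u2 u3 A B C)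
    (hs : IsIndCycle G 6 s) (h1 : u1 ∉ s) (h2 : u2 ∉ s) : s ∩ A = ∅ := by
  -- otherwise `s ∩ A` is closed under adjacency in `s`, so `s ⊆ A`, where edges follow a path
  by_contra hne
  have hsA : s ∩ A = s := by
    refine hs.eq_of_adj_closed inter_subset_left (nonempty_iff_ne_empty.2 hne)
      fun x hx y hy hxy => mem_inter.2 ⟨hy, ?_⟩
    rcases hF.eq_or_eq_or_mem_of_adj (mem_inter.1 hx).2 hxy with rfl | rfl | hyA
    exacts [absurd hy h1, absurd hy h2, hyA]
  obtain ⟨x, hx, hle⟩ := hF.exists_card_filter_adj_le_one (hsA ▸ inter_subset_right)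
    (card_pos.1 (hs.1.symm ▸ by norm_num))
  have := hs.card_filter_adj (by norm_num) hx
  omega

theorem inter_nonempty_of_mem_of_notMem (hF : FWitness G u1 u2 u3 A B C)
    (hs : IsIndCycle G 6 s) (h1 : u1 ∈ s) (h2 : u2 ∉ s) : (s ∩ C).Nonempty := by
  -- otherwise `insert u1 (s ∩ A)` is closed under adjacency in `s`, yet has at most 3 vertices
  rw [nonempty_iff_ne_empty]
  intro hC
  have hT : insert u1 (s ∩ A) = s := by
    refine hs.eq_of_adj_closed (insert_subset h1 inter_subset_left) (insert_nonempty _ _)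
      fun x hx y hy hxy => ?_
    rcases mem_insert.1 hx with rfl | hx
    · rcases (hF.adj_hub_iff y).1 hxy with hyA | hyC
      · exact mem_insert_of_mem (mem_inter.2 ⟨hy, hyA⟩)
      · exact absurd (mem_inter.2 ⟨hy, hyC⟩) (hC ▸ notMem_empty y)
    · rcases hF.eq_or_eq_or_mem_of_adj (mem_inter.1 hx).2 hxy with rfl | rfl | hyA
      exacts [mem_insert_self _ _, absurd hy h2, mem_insert_of_mem (mem_inter.2 ⟨hy, hyA⟩)]
  have hA := hF.card_inter_add_card_inter hs h1
  have := card_insert_le u1 (s ∩ A)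
  rw [hT, hs.1, hC, card_empty] at *
  omega

theorem hub_mem (hF : FWitness G u1 u2 u3 A B C) (hs : IsIndCycle G 6 s) : u1 ∈ s := by
  -- if `u1 ∉ s`, then `#s ≤ 3` unless `u2, u3 ∈ s`, where `#s = 6` would force `s ∩ B = ∅`
  by_contra h1
  have hcard := hF.card_le_hubs_add_parts s
  rw [hs.1, if_neg h1] at hcard
  have hA := hF.inter_eq_empty_of_notMem_of_notMem hs h1
  have hC := hF.rotate.rotate.inter_eq_empty_of_notMem_of_notMem hs
  by_cases h2 : u2 ∈ s <;> by_cases h3 : u3 ∈ s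
  · have := hF.rotate.card_inter_add_card_inter hs h2
    have := hF.rotate.rotate.card_inter_add_card_inter hs h3
    have := card_pos.2 (hF.rotate.rotate.inter_nonempty_of_mem_of_notMem hs h3 h1)
    rw [if_pos h2, if_pos h3] at hcard
    omega
  · have := hF.rotate.card_inter_add_card_inter hs h2
    rw [if_pos h2, if_neg h3, hC h3 h1, card_empty] at hcard
    omega
  · have := hF.rotate.rotate.card_inter_add_card_inter hs h3
    rw [if_neg h2, if_pos h3, hA h2, card_empty] at hcard
    omega
  · rw [if_neg h2, if_neg h3, hA h2, hC h3 h1,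
      hF.rotate.inter_eq_empty_of_notMem_of_notMem hs h2 h3, card_empty] at hcard
    omega

theorem exists_eq_hexagon (hF : FWitness G u1 u2 u3 A B C) (hs : IsIndCycle G 6 s) :
    ∃ a ∈ A, ∃ b ∈ B, ∃ c ∈ C, s = ({u1, a, u2, b, u3, c} : Finset V) := by
  have h1 := hF.hub_mem hs
  have h2 := hF.rotate.hub_mem hs
  have h3 := hF.rotate.rotate.hub_mem hs
  have hCA := hF.card_inter_add_card_inter hs h1
  have hAB := hF.rotate.card_inter_add_card_inter hs h2
  have hBC := hF.rotate.rotate.card_inter_add_card_inter hs h3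
  obtain ⟨a, ha⟩ := card_eq_one.1 (show #(s ∩ A) = 1 by omega)
  obtain ⟨b, hb⟩ := card_eq_one.1 (show #(s ∩ B) = 1 by omega)
  obtain ⟨c, hc⟩ := card_eq_one.1 (show #(s ∩ C) = 1 by omega)
  have mem_of_inter_eq {P : Finset V} {p : V} (h : s ∩ P = {p}) : p ∈ s ∧ p ∈ P :=
    mem_inter.1 (h ▸ mem_singleton_self p)
  have eq_of_inter_eq {P : Finset V} {p x : V} (h : s ∩ P = {p}) (hx : x ∈ s) (hxP : x ∈ P) :
      x = p := mem_singleton.1 (h ▸ mem_inter.2 ⟨hx, hxP⟩)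
  refine ⟨a, (mem_of_inter_eq ha).2, b, (mem_of_inter_eq hb).2, c, (mem_of_inter_eq hc).2, ?_⟩
  ext x
  simp only [mem_insert, mem_singleton]
  refine ⟨fun hx => ?_, ?_⟩
  · rcases hF.eq_hub_or_mem_part x with h | h | h | h | h | h
    · exact .inl h
    · exact .inr <| .inr <| .inl h
    · exact .inr <| .inr <| .inr <| .inr <| .inl h
    · exact .inr <| .inl (eq_of_inter_eq ha hx h)
    · exact .inr <| .inr <| .inr <| .inl (eq_of_inter_eq hb hx h)
    · exact .inr <| .inr <| .inr <| .inr <| .inr (eq_of_inter_eq hc hx h)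
  · rintro (rfl | rfl | rfl | rfl | rfl | rfl)
    exacts [h1, (mem_of_inter_eq ha).1, h2, (mem_of_inter_eq hb).1, h3, (mem_of_inter_eq hc).1]

end

theorem isIndCycle_iff (hF : FWitness G u1 u2 u3 A B C) (s : Finset V) :
    IsIndCycle G 6 s ↔ ∃ a ∈ A, ∃ b ∈ B, ∃ c ∈ C, s = ({u1, a, u2, b, u3, c} : Finset V) := by
  classical
  refine ⟨hF.exists_eq_hexagon, ?_⟩
  rintro ⟨a, ha, b, hb, c, hc, rfl⟩
  exact hF.isIndCycle_hexagon ha hb hc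

theorem hexagon_inter_eq (hF : FWitness G u1 u2 u3 A B C) {a b c : V} (ha : a ∈ A)
    (hb : b ∈ B) (hc : c ∈ C) :
    ({u1, a, u2, b, u3, c} : Finset V) ∩ A = {a} ∧ ({u1, a, u2, b, u3, c} : Finset V) ∩ B = {b} ∧
      ({u1, a, u2, b, u3, c} : Finset V) ∩ C = {c} := by
  have hu1 := hF.hub_notMem_parts
  have hu2 := hF.rotate.hub_notMem_parts
  have hu3 := hF.rotate.rotate.hub_notMem_parts
  have ha' := hF.notMem_of_mem ha
  have hb' := hF.rotate.notMem_of_mem hb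
  have hc' := hF.rotate.rotate.notMem_of_mem hc
  simp [insert_inter_of_mem, insert_inter_of_notMem, *]

theorem c6Count_eq (hF : FWitness G u1 u2 u3 A B C) : c6Count G = #A * #B * #C := by
  set hexagon : V × V × V → Finset V := fun p => {u1, p.1, u2, p.2.1, u3, p.2.2}
  have hcycles : {s | IsIndCycle G 6 s} = ((A ×ˢ B ×ˢ C).image hexagon : Set (Finset V)) := by
    ext s
    simp only [Set.mem_ofPred_eq, hF.isIndCycle_iff, coe_image, coe_product, Set.mem_image,
      Set.mem_prod, mem_coe, Prod.exists, hexagon]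
    constructor
    · rintro ⟨a, ha, b, hb, c, hc, rfl⟩
      exact ⟨a, b, c, ⟨ha, hb, hc⟩, rfl⟩
    · rintro ⟨a, b, c, ⟨ha, hb, hc⟩, rfl⟩
      exact ⟨a, ha, b, hb, c, hc, rfl⟩
  have hinj : Set.InjOn hexagon (A ×ˢ B ×ˢ C : Finset _) := by
    rintro ⟨a, b, c⟩ habc ⟨a', b', c'⟩ habc' heq
    simp only [coe_product, Set.mem_prod, mem_coe] at habc habc'
    obtain ⟨hA, hB, hC⟩ := hF.hexagon_inter_eq habc.1 habc.2.1 habc.2.2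
    obtain ⟨hA', hB', hC'⟩ := hF.hexagon_inter_eq habc'.1 habc'.2.1 habc'.2.2
    simp only [hexagon] at heq
    rw [heq] at hA hB hC
    simp_all
  rw [c6Count, hcycles, Set.ncard_coe_finset, card_image_of_injOn hinj, card_product,
    card_product, mul_assoc]

end FWitness

theorem mul_mul_eq_h0 {p q r n : ℕ} (hsum : p + q + r = n - 3) (hpq : p ≤ q + 1) (hqp : q ≤ p + 1)
    (hpr : p ≤ r + 1) (hrp : r ≤ p + 1) (hqr : q ≤ r + 1) (hrq : r ≤ q + 1) :
    p * q * r = h0 n := by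
  unfold h0
  split_ifs
  · obtain ⟨rfl, rfl, rfl⟩ : p = n / 3 - 1 ∧ q = n / 3 - 1 ∧ r = n / 3 - 1 := by omega
    ring
  · obtain ⟨rfl, rfl, rfl⟩ | ⟨rfl, rfl, rfl⟩ | ⟨rfl, rfl, rfl⟩ :
        (p = (n - 4) / 3 ∧ q = (n - 4) / 3 ∧ r = (n - 1) / 3) ∨
        (p = (n - 4) / 3 ∧ q = (n - 1) / 3 ∧ r = (n - 4) / 3) ∨
        (p = (n - 1) / 3 ∧ q = (n - 4) / 3 ∧ r = (n - 4) / 3) := by omega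
    all_goals ring
  · obtain ⟨rfl, rfl, rfl⟩ | ⟨rfl, rfl, rfl⟩ | ⟨rfl, rfl, rfl⟩ :
        (p = (n - 5) / 3 ∧ q = (n - 2) / 3 ∧ r = (n - 2) / 3) ∨
        (p = (n - 2) / 3 ∧ q = (n - 5) / 3 ∧ r = (n - 2) / 3) ∨
        (p = (n - 2) / 3 ∧ q = (n - 2) / 3 ∧ r = (n - 5) / 3) := by omega
    all_goals ring

theorem stmt13_general {V : Type*} [Fintype V] [DecidableEq V] (n : ℕ)
    (hV : Fintype.card V = n) (G : SimpleGraph V) (u1 u2 u3 : V) (A B C : Finset V)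
    (hF : FWitness G u1 u2 u3 A B C) :
    c6Count G = h0 n ∧
    ∀ s : Finset V, IsIndCycle G 6 s ↔
      ∃ a ∈ A, ∃ b ∈ B, ∃ c ∈ C, s = ({u1, a, u2, b, u3, c} : Finset V) := by
  refine ⟨?_, hF.isIndCycle_iff⟩
  rw [hF.c6Count_eq]
  obtain ⟨-, -, -, -, -, -, -, -, -, -, hcard, hAB, hBA, hAC, hCA, hBC, hCB, -⟩ := hF
  exact mul_mul_eq_h0 (hV ▸ hcard) hAB hBA hAC hCA hBC hCB

theorem stmt13 {V : Type*} [Fintype V] [DecidableEq V] (n : ℕ) (hn : 6 ≤ n)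
    (hV : Fintype.card V = n) (G : SimpleGraph V) (u1 u2 u3 : V) (A B C : Finset V)
    (hF : FWitness G u1 u2 u3 A B C) :
    c6Count G = h0 n ∧
    ∀ s : Finset V, IsIndCycle G 6 s ↔
      ∃ a ∈ A, ∃ b ∈ B, ∃ c ∈ C, s = ({u1, a, u2, b, u3, c} : Finset V) :=
  stmt13_general n hV G u1 u2 u3 A B C hF
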